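/- arXiv:2209.09389 — 4 statements merged into one kernel-verified Lean document; each statement's English description precedes it below -/
import Mathlib

section
/- If φ : ℝⁿ → ℝⁿ is component-wise non-expansive (i.e., |φ(u) - φ(v)| ≤ |u - v| component-wise for all u, v) and A is an n×n real matrix with Perron–Frobenius eigenvalue (spectral radius of |A|) less than 1, then for every b ∈ ℝⁿ the equation x = φ(Ax + b) has at most one solution. -/
open Matrix Filter

noncomputable def specRad {n : ℕ} (M : Matrix (Fin n) (Fin n) ℝ) : ENNReal :=
  spectralRadius ℂ (M.map (Complex.ofReal))

def entAbs {n : ℕ} (A : Matrix (Fin n) (Fin n) ℝ) : Matrix (Fin n) (Fin n) ℝ :=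
  A.map (fun x => |x|)

def CONE {n : ℕ} (φ : (Fin n → ℝ) → (Fin n → ℝ)) : Prop :=
  ∀ u v : Fin n → ℝ, ∀ i, |φ u i - φ v i| ≤ |u i - v i|

attribute [local instance] Matrix.linftyOpNormedRing Matrix.linftyOpNormedAlgebra
  Matrix.linftyOpNormedSpace

lemma aux_pow_tendsto {A : Type*} [NormedRing A] [NormedAlgebra ℂ A] [CompleteSpace A]
    (a : A) (h : spectralRadius ℂ a < 1) : Tendsto (fun k : ℕ => ‖a ^ k‖) atTop (nhds 0) := by
  obtain ⟨r, hr, hr1⟩ := exists_between h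
  lift r to NNReal using (hr1.trans ENNReal.one_lt_top).ne
  have hr1' : r < 1 := by exact_mod_cast hr1
  have hgel := spectrum.pow_nnnorm_pow_one_div_tendsto_nhds_spectralRadius a
  have hev : ∀ᶠ k : ℕ in atTop, (‖a ^ k‖₊ : ENNReal) ^ (1 / (k:ℝ)) < r :=
    hgel.eventually_lt_const hr
  have hev2 : ∀ᶠ k : ℕ in atTop, ‖a ^ k‖ ≤ (r:ℝ) ^ k := by
    filter_upwards [hev, eventually_ge_atTop 1] with k hk hk1
    have hk0 : (1 / (k:ℝ)) * k = 1 := by field_simp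
    have h2 : ((‖a ^ k‖₊ : ENNReal) ^ (1 / (k:ℝ))) ^ (k:ℝ) ≤ (r : ENNReal) ^ (k:ℝ) :=
      ENNReal.rpow_le_rpow hk.le (Nat.cast_nonneg k)
    rw [← ENNReal.rpow_mul, hk0, ENNReal.rpow_one, ENNReal.rpow_natCast,
      ← ENNReal.coe_pow, ENNReal.coe_le_coe] at h2
    calc ‖a ^ k‖ = ((‖a ^ k‖₊ : NNReal) : ℝ) := rfl
      _ ≤ ((r ^ k : NNReal) : ℝ) := by exact_mod_cast h2
      _ = (r:ℝ) ^ k := by push_cast; ring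
  exact squeeze_zero' (Eventually.of_forall fun k => norm_nonneg _) hev2
    (tendsto_pow_atTop_nhds_zero_of_lt_one r.coe_nonneg hr1')

theorem cone_pf_unique_solution {n : ℕ} (A : Matrix (Fin n) (Fin n) ℝ)
    (φ : (Fin n → ℝ) → (Fin n → ℝ)) (hφ : CONE φ)
    (hA : specRad (entAbs A) < 1) (b x y : Fin n → ℝ)
    (hx : x = φ (A.mulVec x + b)) (hy : y = φ (A.mulVec y + b)) : x = y := by
  haveI : CompleteSpace (Matrix (Fin n) (Fin n) ℂ) := FiniteDimensional.complete ℂ _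
  set B := entAbs A with hBdef
  have hB : ∀ i j, 0 ≤ B i j := fun i j => abs_nonneg _
  set d : Fin n → ℝ := fun i => |x i - y i| with hddef
  have hd0 : ∀ i, 0 ≤ d i := fun i => abs_nonneg _
  -- key step
  have hstep : ∀ i, d i ≤ B.mulVec d i := by
    intro i
    have h1 : d i ≤ |A.mulVec x i + b i - (A.mulVec y i + b i)| := by
      calc d i = |φ (A.mulVec x + b) i - φ (A.mulVec y + b) i| := by rw [← hx, ← hy]
        _ ≤ |(A.mulVec x + b) i - (A.mulVec y + b) i| := hφ _ _ i
        _ = |A.mulVec x i + b i - (A.mulVec y i + b i)| := rfl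
    refine h1.trans ?_
    have h2 : A.mulVec x i + b i - (A.mulVec y i + b i) = ∑ j, A i j * (x j - y j) := by
      simp only [Matrix.mulVec, dotProduct, mul_sub, Finset.sum_sub_distrib]
      ring
    rw [h2]
    calc |∑ j, A i j * (x j - y j)| ≤ ∑ j, |A i j * (x j - y j)| :=
          Finset.abs_sum_le_sum_abs _ _
      _ = ∑ j, B i j * d j := by
          apply Finset.sum_congr rfl; intro j _; rw [abs_mul]; rfl
      _ = B.mulVec d i := rfl
  -- monotone iteration
  have hmono : ∀ (u v : Fin n → ℝ), (∀ i, u i ≤ v i) → ∀ i, B.mulVec u i ≤ B.mulVec v i := by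
    intro u v huv i
    simp only [Matrix.mulVec, dotProduct]
    apply Finset.sum_le_sum
    intro j _
    exact mul_le_mul_of_nonneg_left (huv j) (hB i j)
  have hiter : ∀ k : ℕ, ∀ i, d i ≤ (B ^ k).mulVec d i := by
    intro k
    induction k with
    | zero => intro i; simp [Matrix.one_mulVec]
    | succ k ih =>
      intro i
      have : (B ^ (k+1)).mulVec d = B.mulVec ((B ^ k).mulVec d) := by
        rw [pow_succ']
        rw [← Matrix.mulVec_mulVec]
      rw [this]
      exact (hstep i).trans (hmono d _ ih i)
  -- norm machinery
  set Bc : Matrix (Fin n) (Fin n) ℂ := B.map Complex.ofReal with hBcdef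
  have hA' : spectralRadius ℂ Bc < 1 := hA
  have hnorm := aux_pow_tendsto Bc hA'
  have hpow : ∀ k : ℕ, Bc ^ k = (B ^ k).map Complex.ofReal := by
    intro k
    have := map_pow (Complex.ofRealHom.mapMatrix) B k
    exact this.symm
  have hent : ∀ (M : Matrix (Fin n) (Fin n) ℂ) (i j : Fin n), ‖M i j‖ ≤ ‖M‖ := by
    intro M i j
    rw [Matrix.linfty_opNorm_def]
    have h1 : ‖M i j‖₊ ≤ ∑ j', ‖M i j'‖₊ :=
      Finset.single_le_sum (f := fun j' => ‖M i j'‖₊) (fun _ _ => zero_le) (Finset.mem_univ j)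
    have h2 : (∑ j', ‖M i j'‖₊) ≤ Finset.univ.sup fun i => ∑ j', ‖M i j'‖₊ :=
      Finset.le_sup (f := fun i => ∑ j', ‖M i j'‖₊) (Finset.mem_univ i)
    exact_mod_cast h1.trans h2
  have hentry : ∀ (k : ℕ) (i j : Fin n), (B ^ k) i j ≤ ‖Bc ^ k‖ := by
    intro k i j
    have : |(B ^ k) i j| = ‖(Bc ^ k) i j‖ := by
      rw [hpow k]
      simp [Matrix.map_apply]
    calc (B ^ k) i j ≤ |(B ^ k) i j| := le_abs_self _
      _ = ‖(Bc ^ k) i j‖ := this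
      _ ≤ ‖Bc ^ k‖ := hent _ i j
  set S : ℝ := ∑ j, d j with hSdef
  have hbound : ∀ (k : ℕ) (i : Fin n), d i ≤ ‖Bc ^ k‖ * S := by
    intro k i
    calc d i ≤ (B ^ k).mulVec d i := hiter k i
      _ = ∑ j, (B ^ k) i j * d j := rfl
      _ ≤ ∑ j, ‖Bc ^ k‖ * d j := by
          apply Finset.sum_le_sum
          intro j _
          exact mul_le_mul_of_nonneg_right (hentry k i j) (hd0 j)
      _ = ‖Bc ^ k‖ * S := by rw [hSdef, Finset.mul_sum]
  have hlim : Tendsto (fun k : ℕ => ‖Bc ^ k‖ * S) atTop (nhds 0) := by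
    simpa using hnorm.mul_const S
  funext i
  have hle : d i ≤ 0 := ge_of_tendsto' hlim (fun k => hbound k i)
  have : d i = 0 := le_antisymm hle (hd0 i)
  have := abs_eq_zero.mp this
  linarith
end

section
/- If φ : ℝⁿ → ℝⁿ is continuous and component-wise non-expansive, and A is an n×n real matrix with λ_pf(|A|) < 1, then for every b ∈ ℝⁿ the Picard iteration x_{t+1} = φ(A x_t + b) starting from x_0 = 0 is a Cauchy sequence, and its limit x satisfies x = φ(Ax + b). Hence a solution exists. -/
open Matrix Filter
open scoped ENNReal NNReal

attribute [local instance] Matrix.linftyOpNormedRing Matrix.linftyOpNormedAlgebra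

private lemma map_ofReal_pow {n : ℕ} (B : Matrix (Fin n) (Fin n) ℝ) (k : ℕ) :
    (B.map Complex.ofReal) ^ k = (B ^ k).map Complex.ofReal := by
  induction k with
  | zero => ext i j; simp [Matrix.map_apply, Matrix.one_apply]; split <;> simp
  | succ k ih =>
    rw [pow_succ, pow_succ, ih]
    ext i j
    simp [Matrix.map_apply, Matrix.mul_apply]

private lemma norm_map_ofReal {n : ℕ} (C : Matrix (Fin n) (Fin n) ℝ) :
    ‖C.map (Complex.ofReal)‖ = ‖C‖ := by
  rw [← coe_nnnorm, ← coe_nnnorm]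
  congr 1
  rw [Matrix.linfty_opNNNorm_def, Matrix.linfty_opNNNorm_def]
  simp [Matrix.map_apply, Complex.nnnorm_real]

private lemma exists_pow_norm_lt_one {n : ℕ} (B : Matrix (Fin n) (Fin n) ℝ)
    (h : spectralRadius ℂ (B.map Complex.ofReal) < 1) :
    ∃ k, 0 < k ∧ ‖B ^ k‖ < 1 := by
  haveI : CompleteSpace (Matrix (Fin n) (Fin n) ℂ) := FiniteDimensional.complete ℂ _
  have hg := spectrum.pow_nnnorm_pow_one_div_tendsto_nhds_spectralRadius (B.map Complex.ofReal)
  have hev := hg.eventually_lt_const h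
  obtain ⟨k, hk1, hk2⟩ := ((eventually_ge_atTop 1).and hev).exists
  refine ⟨k, hk1, ?_⟩
  have heq : ‖B ^ k‖ = ‖(B.map Complex.ofReal) ^ k‖ := by
    rw [map_ofReal_pow, norm_map_ofReal]
  rw [heq]
  by_contra hge
  push_neg at hge
  have h1 : (1 : ℝ≥0∞) ≤ (‖(B.map Complex.ofReal) ^ k‖₊ : ℝ≥0∞) := by
    exact_mod_cast (by exact_mod_cast hge : (1 : ℝ≥0) ≤ ‖(B.map Complex.ofReal) ^ k‖₊)
  exact absurd hk2 (not_lt.mpr (ENNReal.one_le_rpow h1 (by positivity)))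


private lemma summable_norm_pow_aux {R : Type*} [SeminormedRing R] (B : R) {k : ℕ}
    (hk : 0 < k) (hρ : ‖B ^ k‖ < 1) : Summable fun t : ℕ => ‖B ^ t‖ := by
  haveI : NeZero k := ⟨hk.ne'⟩
  rw [← (Nat.divModEquiv k).symm.summable_iff]
  have h1 : Summable fun q : ℕ => ‖B ^ k‖ ^ q :=
    summable_geometric_of_lt_one (norm_nonneg _) hρ
  have h2 : Summable fun r : Fin k => ‖B ^ (r : ℕ)‖ := Summable.of_finite
  have hsum : Summable (fun p : ℕ × Fin k => ‖B ^ k‖ ^ p.1 * ‖B ^ (p.2 : ℕ)‖) :=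
    h1.mul_of_nonneg h2 (fun q => pow_nonneg (norm_nonneg _) q) (fun r => norm_nonneg _)
  refine hsum.of_nonneg_of_le (fun p => norm_nonneg _) (fun p => ?_)
  show ‖B ^ ((Nat.divModEquiv k).symm p)‖ ≤ _
  have hp : ((Nat.divModEquiv k).symm p : ℕ) = p.1 * k + (p.2 : ℕ) := rfl
  rw [hp]
  obtain ⟨q, r⟩ := p
  rcases Nat.eq_zero_or_pos q with hq | hq
  · subst hq; simp
  · rw [pow_add, mul_comm q k, pow_mul]
    exact le_trans (norm_mul_le _ _)
      (mul_le_mul_of_nonneg_right (norm_pow_le' _ hq) (norm_nonneg _))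

theorem picard_cauchy_and_limit_solves {n : ℕ} (A : Matrix (Fin n) (Fin n) ℝ)
    (φ : (Fin n → ℝ) → (Fin n → ℝ)) (hφc : Continuous φ) (hφ : CONE φ)
    (hA : specRad (entAbs A) < 1) (b : Fin n → ℝ) (x : ℕ → (Fin n → ℝ))
    (h0 : x 0 = 0) (hrec : ∀ t, x (t + 1) = φ (A.mulVec (x t) + b)) :
    CauchySeq x ∧ ∃ l, Tendsto x atTop (nhds l) ∧ l = φ (A.mulVec l + b) := by
  set B := entAbs A with hB
  have hB0 : ∀ i j, 0 ≤ B i j := fun i j => abs_nonneg _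
  set d0 : Fin n → ℝ := fun i => |x 1 i - x 0 i| with hd0
  -- key entrywise bound
  have key : ∀ t i, |x (t + 1) i - x t i| ≤ ((B ^ t) *ᵥ d0) i := by
    intro t
    induction t with
    | zero => intro i; simp [Matrix.one_mulVec, hd0]
    | succ t ih =>
      intro i
      have h1 : |x (t + 2) i - x (t + 1) i| ≤
          |(A *ᵥ x (t + 1) + b) i - (A *ᵥ x t + b) i| := by
        rw [hrec (t + 1), hrec t]; exact hφ _ _ i
      have h2 : (A *ᵥ x (t + 1) + b) i - (A *ᵥ x t + b) i
          = ∑ j, A i j * (x (t + 1) j - x t j) := by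
        simp [Matrix.mulVec, dotProduct, mul_sub, Finset.sum_sub_distrib]
      calc |x (t + 1 + 1) i - x (t + 1) i|
          ≤ |∑ j, A i j * (x (t + 1) j - x t j)| := by rw [← h2]; exact h1
        _ ≤ ∑ j, |A i j * (x (t + 1) j - x t j)| := Finset.abs_sum_le_sum_abs _ _
        _ = ∑ j, B i j * |x (t + 1) j - x t j| := by
            simp [abs_mul, hB, entAbs, Matrix.map_apply]
        _ ≤ ∑ j, B i j * ((B ^ t) *ᵥ d0) j :=
            Finset.sum_le_sum fun j _ => mul_le_mul_of_nonneg_left (ih j) (hB0 i j)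
        _ = ((B ^ (t + 1)) *ᵥ d0) i := by
            rw [pow_succ', ← Matrix.mulVec_mulVec]
            simp [Matrix.mulVec, dotProduct]
  -- distance bound
  have hdist : ∀ t, dist (x t) (x (t + 1)) ≤ ‖B ^ t‖ * ‖d0‖ := by
    intro t
    have hv := Matrix.linfty_opNorm_mulVec (B ^ t) d0
    refine le_trans ?_ hv
    rw [dist_eq_norm]
    refine (pi_norm_le_iff_of_nonneg (norm_nonneg _)).mpr fun i => ?_
    have hi : ‖(x t - x (t + 1)) i‖ = |x (t + 1) i - x t i| := by
      simp [Real.norm_eq_abs, abs_sub_comm]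
    rw [hi]
    exact (key t i).trans ((le_abs_self _).trans (norm_le_pi_norm ((B ^ t) *ᵥ d0) i))
  -- summability and Cauchy
  obtain ⟨k, hk0, hρ⟩ := exists_pow_norm_lt_one B hA
  have hS : Summable (fun t : ℕ => ‖B ^ t‖) := summable_norm_pow_aux B hk0 hρ
  have hSd : Summable (fun t => dist (x t) (x (t + 1))) :=
    Summable.of_nonneg_of_le (fun t => dist_nonneg) hdist (hS.mul_right _)
  have hc : CauchySeq x := cauchySeq_of_summable_dist hSd
  obtain ⟨l, hl⟩ := cauchySeq_tendsto_of_complete hc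
  refine ⟨hc, l, hl, ?_⟩
  have h2 : Tendsto (fun t => x (t + 1)) atTop (nhds l) :=
    hl.comp (tendsto_add_atTop_nat 1)
  have hcont : Continuous fun v : Fin n → ℝ => φ (A *ᵥ v + b) :=
    hφc.comp ((continuous_const.matrix_mulVec continuous_id).add continuous_const)
  have h3 : Tendsto (fun t => φ (A *ᵥ x t + b)) atTop (nhds (φ (A *ᵥ l + b))) :=
    (hcont.tendsto l).comp hl
  have h4 : (fun t => φ (A *ᵥ x t + b)) = fun t => x (t + 1) := by
    funext t; exact (hrec t).symm
  rw [h4] at h3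
  exact tendsto_nhds_unique h2 h3
end

section
/- Let φ act component-wise, be component-wise non-expansive and positively homogeneous, and let (A, B, C, D) define an implicit model with λ_pf(|A|) < 1. For S = diag(s) with s > 0, the rescaled model (SAS^{-1}, SB, CS^{-1}, D) produces the same prediction ŷ = Cx + Du for every input u, where x is the unique solution of x = φ(Ax + Bu) and x' = Sx is the unique solution of x' = φ(SAS^{-1}x' + SBu). -/
open Matrix Filter
open scoped NNReal

attribute [local instance] Matrix.linftyOpNormedRing Matrix.linftyOpNormedAlgebra

lemma pow_nnnorm_eventually_le {n : ℕ} (N : Matrix (Fin n) (Fin n) ℝ)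
    (hrad : specRad N < 1) :
    ∃ r : ℝ≥0, r < 1 ∧ ∀ᶠ k : ℕ in atTop, ‖(N.map Complex.ofReal) ^ k‖₊ ≤ r ^ k := by
  obtain ⟨c, hc1, hc2⟩ := exists_between hrad
  have hcne : c ≠ ⊤ := (hc2.trans_le le_top).ne
  have hgel := spectrum.pow_nnnorm_pow_one_div_tendsto_nhds_spectralRadius (N.map Complex.ofReal)
  have hev : ∀ᶠ k : ℕ in atTop, (‖(N.map Complex.ofReal) ^ k‖₊ : ENNReal) ^ (1 / (k:ℝ)) < c :=
    hgel.eventually_lt_const hc1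
  refine ⟨c.toNNReal, ?_, ?_⟩
  · have := hc2
    rwa [← ENNReal.coe_lt_one_iff, ENNReal.coe_toNNReal hcne]
  · filter_upwards [hev, eventually_ge_atTop 1] with k hk hk1
    have hkne : (k:ℝ) ≠ 0 := by positivity
    have : ((‖(N.map Complex.ofReal) ^ k‖₊ : ENNReal) ^ (1 / (k:ℝ))) ^ (k:ℝ) ≤ c ^ (k:ℝ) :=
      ENNReal.rpow_le_rpow hk.le (by positivity)
    rw [← ENNReal.rpow_mul, one_div, inv_mul_cancel₀ hkne,
      ENNReal.rpow_one, ENNReal.rpow_natCast] at this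
    have h2 : (‖(N.map Complex.ofReal) ^ k‖₊ : ENNReal) ≤ ((c.toNNReal ^ k : ℝ≥0) : ENNReal) := by
      rwa [ENNReal.coe_pow, ENNReal.coe_toNNReal hcne]
    exact_mod_cast h2

lemma subinvariant_zero {n : ℕ} (N : Matrix (Fin n) (Fin n) ℝ)
    (hN : ∀ i j, 0 ≤ N i j) (hrad : specRad N < 1)
    (w : Fin n → ℝ) (hw : ∀ i, 0 ≤ w i)
    (hle : ∀ i, w i ≤ N.mulVec w i) : w = 0 := by
  obtain ⟨r, hr1, hev⟩ := pow_nnnorm_eventually_le N hrad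
  -- w ≤ N^k w
  have hpow : ∀ k : ℕ, ∀ i, w i ≤ (N ^ k).mulVec w i := by
    intro k
    induction k with
    | zero => intro i; simp
    | succ k ih =>
      intro i
      calc w i ≤ N.mulVec w i := hle i
        _ ≤ N.mulVec ((N ^ k).mulVec w) i := by
            simp only [mulVec, dotProduct]
            exact Finset.sum_le_sum fun j _ => mul_le_mul_of_nonneg_left (ih j) (hN i j)
        _ = (N ^ (k+1)).mulVec w i := by
            rw [mulVec_mulVec, pow_succ']
  -- complex version
  set wc : Fin n → ℂ := fun i => (w i : ℂ) with hwc
  have hcast : ∀ k : ℕ, ∀ i, (((N ^ k).mulVec w i : ℝ) : ℂ)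
      = ((N.map Complex.ofReal) ^ k).mulVec wc i := by
    intro k i
    have hmp : (N.map Complex.ofReal) ^ k = (N ^ k).map Complex.ofReal := by
      have := map_pow (Complex.ofRealHom.mapMatrix (m := Fin n)) N k
      exact (by simpa [RingHom.mapMatrix_apply] using this.symm :
        N.map ⇑Complex.ofRealHom ^ k = (N ^ k).map ⇑Complex.ofRealHom)
    rw [hmp]
    simp [mulVec, dotProduct, Matrix.map_apply, hwc]
  have hbound : ∀ᶠ k : ℕ in atTop, ∀ i, w i ≤ (r : ℝ) ^ k * ‖wc‖ := by
    filter_upwards [hev] with k hk i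
    calc w i ≤ (N ^ k).mulVec w i := hpow k i
      _ ≤ ‖(((N ^ k).mulVec w i : ℝ) : ℂ)‖ := by
          rw [Complex.norm_real]; exact le_abs_self _
      _ = ‖((N.map Complex.ofReal) ^ k).mulVec wc i‖ := by rw [hcast]
      _ ≤ ‖((N.map Complex.ofReal) ^ k).mulVec wc‖ := norm_le_pi_norm _ i
      _ ≤ ‖(N.map Complex.ofReal) ^ k‖ * ‖wc‖ := linfty_opNorm_mulVec _ _
      _ ≤ (r : ℝ) ^ k * ‖wc‖ := by
          apply mul_le_mul_of_nonneg_right _ (norm_nonneg _)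
          calc ‖(N.map Complex.ofReal) ^ k‖ = (‖(N.map Complex.ofReal) ^ k‖₊ : ℝ) := rfl
            _ ≤ ((r ^ k : ℝ≥0) : ℝ) := by exact_mod_cast hk
            _ = (r : ℝ) ^ k := by push_cast; ring
  have htend : Tendsto (fun k : ℕ => (r : ℝ) ^ k * ‖wc‖) atTop (nhds 0) := by
    rw [show (0:ℝ) = 0 * ‖wc‖ by ring]
    exact (tendsto_pow_atTop_nhds_zero_of_lt_one r.coe_nonneg
      (by exact_mod_cast hr1)).mul_const _
  funext i
  have : w i ≤ 0 := ge_of_tendsto htend (hbound.mono fun k hk => hk i)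
  exact le_antisymm this (hw i)

theorem rescaled_implicit_model_same_prediction {n p q : ℕ}
    (A : Matrix (Fin n) (Fin n) ℝ) (B : Matrix (Fin n) (Fin p) ℝ)
    (C : Matrix (Fin q) (Fin n) ℝ) (D : Matrix (Fin q) (Fin p) ℝ)
    (σ : ℝ → ℝ) (φ : (Fin n → ℝ) → (Fin n → ℝ))
    (hφσ : ∀ x i, φ x i = σ (x i))
    (hcone : ∀ u v : ℝ, |σ u - σ v| ≤ |u - v|)
    (hpos : ∀ α t : ℝ, 0 ≤ α → σ (α * t) = α * σ t)
    (hA : specRad (entAbs A) < 1)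
    (s : Fin n → ℝ) (hs : ∀ i, 0 < s i)
    (u : Fin p → ℝ) (x x' : Fin n → ℝ)
    (hx : x = φ (A.mulVec x + B.mulVec u))
    (hx' : x' = φ ((Matrix.diagonal s * A * Matrix.diagonal (fun j => (s j)⁻¹)).mulVec x'
              + (Matrix.diagonal s * B).mulVec u)) :
    C.mulVec x + D.mulVec u
      = (C * Matrix.diagonal (fun j => (s j)⁻¹)).mulVec x' + D.mulVec u := by
  set g : Fin n → ℝ := fun j => (s j)⁻¹ * x' j with hg
  -- rewrite the rescaled fixed-point equation
  have hdiagA : (Matrix.diagonal s * A * Matrix.diagonal (fun j => (s j)⁻¹)).mulVec x'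
      = fun i => s i * (A.mulVec g) i := by
    funext i
    rw [← mulVec_mulVec, ← mulVec_mulVec, mulVec_diagonal]
    congr 2
    funext j
    rw [mulVec_diagonal]
  have hdiagB : (Matrix.diagonal s * B).mulVec u = fun i => s i * (B.mulVec u) i := by
    funext i
    rw [← mulVec_mulVec, mulVec_diagonal]
  have hx'i : ∀ i, x' i = σ (s i * ((A.mulVec g) i + (B.mulVec u) i)) := by
    intro i
    conv_lhs => rw [hx']
    rw [hφσ]
    simp [hdiagA, hdiagB, mul_add]
  have hxi : ∀ i, s i * x i = σ (s i * ((A.mulVec x) i + (B.mulVec u) i)) := by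
    intro i
    rw [hpos _ _ (hs i).le]
    congr 1
    conv_lhs => rw [hx]
    rw [hφσ]
    simp
  -- the discrepancy vector
  set w : Fin n → ℝ := fun i => (s i)⁻¹ * |x' i - s i * x i| with hw
  have hwle : ∀ i, w i ≤ (entAbs A).mulVec w i := by
    intro i
    have h1 : |x' i - s i * x i| ≤ s i * ((entAbs A).mulVec w i) := by
      rw [hx'i i, hxi i]
      calc |σ (s i * ((A.mulVec g) i + (B.mulVec u) i))
            - σ (s i * ((A.mulVec x) i + (B.mulVec u) i))|
          ≤ |s i * ((A.mulVec g) i + (B.mulVec u) i)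
            - s i * ((A.mulVec x) i + (B.mulVec u) i)| := hcone _ _
        _ = s i * |(A.mulVec g) i - (A.mulVec x) i| := by
            rw [← mul_sub, abs_mul, abs_of_pos (hs i)]; ring_nf
        _ ≤ s i * ((entAbs A).mulVec w i) := by
            apply mul_le_mul_of_nonneg_left _ (hs i).le
            simp only [mulVec, dotProduct, ← Finset.sum_sub_distrib]
            calc |∑ j, (A i j * g j - A i j * x j)|
                ≤ ∑ j, |A i j * g j - A i j * x j| := Finset.abs_sum_le_sum_abs _ _
              _ = ∑ j, entAbs A i j * w j := by
                  apply Finset.sum_congr rfl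
                  intro j _
                  rw [← mul_sub, abs_mul]
                  have : g j - x j = (s j)⁻¹ * (x' j - s j * x j) := by
                    simp only [hg]
                    rw [mul_sub, ← mul_assoc, inv_mul_cancel₀ (hs j).ne', one_mul]
                  rw [this, abs_mul, abs_of_pos (inv_pos.mpr (hs j))]
                  rfl
    calc w i = (s i)⁻¹ * |x' i - s i * x i| := rfl
      _ ≤ (s i)⁻¹ * (s i * ((entAbs A).mulVec w i)) :=
          mul_le_mul_of_nonneg_left h1 (inv_pos.mpr (hs i)).le
      _ = (entAbs A).mulVec w i := by
          rw [← mul_assoc, inv_mul_cancel₀ (hs i).ne', one_mul]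
  have hw0 : w = 0 := subinvariant_zero (entAbs A)
    (fun i j => abs_nonneg _) hA w
    (fun i => mul_nonneg (inv_pos.mpr (hs i)).le (abs_nonneg _)) hwle
  have hx'eq : ∀ i, x' i = s i * x i := by
    intro i
    have := congrFun hw0 i
    simp only [hw, Pi.zero_apply] at this
    have h2 : |x' i - s i * x i| = 0 := by
      rcases mul_eq_zero.mp this with h | h
      · exact absurd h (inv_ne_zero (hs i).ne')
      · exact h
    have := abs_eq_zero.mp h2
    linarith
  congr 1
  funext i
  rw [← mulVec_mulVec]
  congr 1
  funext j
  rw [mulVec_diagonal, hx'eq j, ← mul_assoc, inv_mul_cancel₀ (hs j).ne', one_mul]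
end

section
/- Let x_a solve x = φ(Ax + b_a) and x_b solve x = φ(Ax + b_b), where φ is component-wise non-expansive and λ_pf(|A|) < 1. Then |x_a - x_b| ≤ (I - |A|)^{-1} |b_a - b_b| entrywise; in particular the solution map b ↦ x(b) is Lipschitz. -/
open Matrix Filter

section Aux

attribute [local instance] Matrix.linftyOpNormedRing Matrix.linftyOpNormedAlgebra

variable {n : ℕ}

local instance : CompleteSpace (Matrix (Fin n) (Fin n) ℂ) :=
  inferInstanceAs (CompleteSpace (Fin n → Fin n → ℂ))

lemma entry_nnnorm_le (M : Matrix (Fin n) (Fin n) ℂ) (i j : Fin n) :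
    ‖M i j‖₊ ≤ ‖M‖₊ := by
  rw [Matrix.linfty_opNNNorm_def]
  refine le_trans ?_ (Finset.le_sup (Finset.mem_univ i))
  exact Finset.single_le_sum (f := fun j => ‖M i j‖₊) (fun _ _ => zero_le)
    (Finset.mem_univ j)

lemma norm_pow_tendsto_zero (M : Matrix (Fin n) (Fin n) ℂ)
    (h : spectralRadius ℂ M < 1) :
    Tendsto (fun k : ℕ => ‖M ^ k‖) atTop (nhds 0) := by
  obtain ⟨r, hr1, hr2⟩ := ENNReal.lt_iff_exists_nnreal_btwn.mp h
  have hgel := spectrum.pow_nnnorm_pow_one_div_tendsto_nhds_spectralRadius M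
  have hev : ∀ᶠ k : ℕ in atTop, (‖M ^ k‖₊ : ENNReal) ^ (1 / (k : ℝ)) < r :=
    hgel.eventually_lt_const hr1
  have hev' : ∀ᶠ k : ℕ in atTop, ‖M ^ k‖ ≤ (r : ℝ) ^ k := by
    filter_upwards [hev, eventually_ge_atTop 1] with k hk hk1
    have hk0 : (k : ℝ) ≠ 0 := Nat.cast_ne_zero.mpr (by omega)
    have : (‖M ^ k‖₊ : ENNReal) = ((‖M ^ k‖₊ : ENNReal) ^ (1 / (k : ℝ))) ^ (k : ℝ) := by
      rw [← ENNReal.rpow_mul, one_div, inv_mul_cancel₀ hk0, ENNReal.rpow_one]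
    have hlt : (‖M ^ k‖₊ : ENNReal) ≤ (r : ENNReal) ^ (k : ℝ) := by
      rw [this]
      exact ENNReal.rpow_le_rpow hk.le (by positivity)
    rw [ENNReal.rpow_natCast, ← ENNReal.coe_pow, ENNReal.coe_le_coe] at hlt
    exact_mod_cast hlt
  have hr2' : (r : ℝ) < 1 := by exact_mod_cast hr2
  have hgeo : Tendsto (fun k : ℕ => (r : ℝ) ^ k) atTop (nhds 0) :=
    tendsto_pow_atTop_nhds_zero_of_lt_one r.coe_nonneg hr2'
  refine squeeze_zero' (Eventually.of_forall fun k => norm_nonneg _) hev' hgeo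

lemma entry_pow_tendsto_zero (B : Matrix (Fin n) (Fin n) ℝ)
    (h : spectralRadius ℂ (B.map Complex.ofReal) < 1) (i j : Fin n) :
    Tendsto (fun k : ℕ => (B ^ k) i j) atTop (nhds 0) := by
  have key : ∀ k : ℕ, (B.map Complex.ofReal) ^ k = (B ^ k).map Complex.ofReal := by
    intro k
    exact (map_pow (Complex.ofRealHom.mapMatrix :
      Matrix (Fin n) (Fin n) ℝ →+* Matrix (Fin n) (Fin n) ℂ) B k).symm
  have habs : ∀ k : ℕ, |(B ^ k) i j| ≤ ‖(B.map Complex.ofReal) ^ k‖ := by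
    intro k
    rw [key k]
    have h1 : ‖((B ^ k).map Complex.ofReal) i j‖ ≤ ‖(B ^ k).map Complex.ofReal‖ := by
      exact_mod_cast entry_nnnorm_le ((B ^ k).map Complex.ofReal) i j
    rwa [Matrix.map_apply, Complex.norm_real, Real.norm_eq_abs] at h1
  have hnorm := norm_pow_tendsto_zero (B.map Complex.ofReal) h
  have : Tendsto (fun k : ℕ => |(B ^ k) i j|) atTop (nhds 0) :=
    squeeze_zero (fun _ => abs_nonneg _) habs hnorm
  exact (tendsto_zero_iff_abs_tendsto_zero _).mpr this

lemma isUnit_det_one_sub (B : Matrix (Fin n) (Fin n) ℝ)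
    (h : spectralRadius ℂ (B.map Complex.ofReal) < 1) :
    IsUnit (1 - B).det := by
  set M := B.map Complex.ofReal
  have h1 : (1 : ℂ) ∈ resolventSet ℂ M := by
    apply spectrum.mem_resolventSet_of_spectralRadius_lt
    simpa using h
  have h2 : IsUnit (1 - M) := by
    simpa [resolventSet, Set.mem_setOf_eq] using h1
  have h3 : IsUnit (1 - M).det := (Matrix.isUnit_iff_isUnit_det _).mp h2
  have h4 : (1 - M) = ((1 - B).map Complex.ofReal) := by
    have := map_sub (Complex.ofRealHom.mapMatrix :
      Matrix (Fin n) (Fin n) ℝ →+* Matrix (Fin n) (Fin n) ℂ) 1 B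
    rw [map_one (Complex.ofRealHom.mapMatrix :
      Matrix (Fin n) (Fin n) ℝ →+* Matrix (Fin n) (Fin n) ℂ)] at this
    exact this.symm
  have h5 : (1 - M).det = Complex.ofReal ((1 - B).det) := by
    rw [h4]
    exact (RingHom.map_det Complex.ofRealHom (1 - B)).symm
  rw [h5] at h3
  have h6 : ((1 - B).det : ℂ) ≠ 0 := h3.ne_zero
  exact isUnit_iff_ne_zero.mpr (by exact_mod_cast h6)

end Aux

theorem solution_map_lipschitz {n : ℕ} (A : Matrix (Fin n) (Fin n) ℝ)
    (φ : (Fin n → ℝ) → (Fin n → ℝ)) (hφ : CONE φ)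
    (hA : specRad (entAbs A) < 1) (ba bb xa xb : Fin n → ℝ)
    (hxa : xa = φ (A.mulVec xa + ba)) (hxb : xb = φ (A.mulVec xb + bb)) :
    ∀ i, |xa i - xb i| ≤ ((1 - entAbs A)⁻¹.mulVec (fun i => |ba i - bb i|)) i := by
  set B := entAbs A with hB
  set d : Fin n → ℝ := fun i => |xa i - xb i| with hd
  set e : Fin n → ℝ := fun i => |ba i - bb i| with he
  have hBnn : ∀ i j, 0 ≤ B i j := fun i j => abs_nonneg _
  -- Step 1: d ≤ B d + e entrywise
  have h1 : ∀ i, d i ≤ (B.mulVec d) i + e i := by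
    intro i
    have := hφ (A.mulVec xa + ba) (A.mulVec xb + bb) i
    rw [← hxa, ← hxb] at this
    refine this.trans ?_
    have heq : (A.mulVec xa + ba) i - (A.mulVec xb + bb) i
        = (∑ j, A i j * (xa j - xb j)) + (ba i - bb i) := by
      simp only [Pi.add_apply, Matrix.mulVec, dotProduct, mul_sub,
        Finset.sum_sub_distrib]
      ring
    rw [heq]
    refine (abs_add_le _ _).trans ?_
    have habs1 : |∑ j, A i j * (xa j - xb j)| ≤ (B.mulVec d) i := by
      refine (Finset.abs_sum_le_sum_abs _ _).trans ?_
      simp only [Matrix.mulVec, dotProduct, hB, entAbs, Matrix.map_apply]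
      exact Finset.sum_le_sum fun j _ => le_of_eq (abs_mul _ _)
    have : e i = |ba i - bb i| := rfl
    linarith
  -- invertibility
  have hdet : IsUnit (1 - B).det := isUnit_det_one_sub B hA
  set y : Fin n → ℝ := (1 - B)⁻¹.mulVec e with hy
  have h2 : y - B.mulVec y = e := by
    have : (1 - B).mulVec y = e := by
      rw [hy, Matrix.mulVec_mulVec, Matrix.mul_nonsing_inv _ hdet, Matrix.one_mulVec]
    rwa [Matrix.sub_mulVec, Matrix.one_mulVec] at this
  set z : Fin n → ℝ := d - y with hz
  have h3 : ∀ i, z i ≤ (B.mulVec z) i := by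
    intro i
    have hyi : y i = (B.mulVec y) i + e i := by
      have := congrFun h2 i
      simp only [Pi.sub_apply] at this
      linarith
    have : z i = d i - y i := rfl
    rw [this, hyi]
    have hBz : (B.mulVec z) i = (B.mulVec d) i - (B.mulVec y) i := by
      rw [hz, Matrix.mulVec_sub]
      rfl
    have := h1 i
    linarith [hBz]
  -- monotonicity of mulVec for nonneg matrices
  have hmono : ∀ (M : Matrix (Fin n) (Fin n) ℝ), (∀ i j, 0 ≤ M i j) →
      ∀ (u v : Fin n → ℝ), (∀ i, u i ≤ v i) → ∀ i, (M.mulVec u) i ≤ (M.mulVec v) i := by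
    intro M hM u v huv i
    simp only [Matrix.mulVec, dotProduct]
    exact Finset.sum_le_sum fun j _ => mul_le_mul_of_nonneg_left (huv j) (hM i j)
  have hpow_nn : ∀ N : ℕ, ∀ i j, 0 ≤ (B ^ N) i j := by
    intro N
    induction N with
    | zero => intro i j; rcases eq_or_ne i j with h | h <;>
        simp [Matrix.one_apply, h]
    | succ N ih =>
        intro i j
        rw [pow_succ, Matrix.mul_apply]
        exact Finset.sum_nonneg fun k _ => mul_nonneg (ih i k) (hBnn k j)
  -- iterate
  have h4 : ∀ N : ℕ, ∀ i, z i ≤ ((B ^ N).mulVec z) i := by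
    intro N
    induction N with
    | zero => intro i; simp [Matrix.one_mulVec]
    | succ N ih =>
        intro i
        refine (ih i).trans ?_
        have := hmono (B ^ N) (hpow_nn N) z (B.mulVec z) h3 i
        refine this.trans (le_of_eq ?_)
        rw [Matrix.mulVec_mulVec, ← pow_succ]
  -- limit
  have h5 : ∀ i, Tendsto (fun N : ℕ => ((B ^ N).mulVec z) i) atTop (nhds 0) := by
    intro i
    have : ∀ N : ℕ, ((B ^ N).mulVec z) i = ∑ j, (B ^ N) i j * z j := by
      intro N; rfl
    simp only [this]
    have : Tendsto (fun N : ℕ => ∑ j, (B ^ N) i j * z j) atTop (nhds (∑ j : Fin n, 0)) := by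
      refine tendsto_finset_sum _ fun j _ => ?_
      have := entry_pow_tendsto_zero B hA i j
      simpa using this.mul_const (z j)
    simpa using this
  have h6 : ∀ i, z i ≤ 0 := fun i => ge_of_tendsto (h5 i) (Eventually.of_forall (h4 · i))
  intro i
  have := h6 i
  simp only [hz, Pi.sub_apply] at this
  have : d i ≤ y i := by linarith
  exact this
end
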